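/- For every pointed Kan complex (K,⋆) and every n ≥ 1, the homotopy group π_n(K,⋆) is a well-defined group: the product [x][y] := [xy] is independent of the choice of representatives x, y and of the filling xy; the class [⋆] is a two-sided identity; every class has an inverse; and the product is associative. Moreover, for n ≥ 2 this group is abelian. -/

import Mathlib

/-- A simplicial set, given combinatorially by sets of `n`-simplices together with
face operators `d i : K_{n+1} → K_n` (`i ≤ n+1`) and degeneracy operators
`s i : K_n → K_{n+1}` (`i ≤ n`) satisfying the simplicial identities.
(The operators are indexed by natural numbers; their values at out-of-range
indices are irrelevant.) -/
structure SSetC where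
  obj : ℕ → Type
  d : (n : ℕ) → ℕ → obj (n + 1) → obj n
  s : (n : ℕ) → ℕ → obj n → obj (n + 1)
  dd : ∀ (n i j : ℕ), i < j → j ≤ n + 2 → ∀ x : obj (n + 2),
      d n i (d (n + 1) j x) = d n (j - 1) (d (n + 1) i x)
  ss : ∀ (n i j : ℕ), i ≤ j → j ≤ n → ∀ x : obj n,
      s (n + 1) i (s n j x) = s (n + 1) (j + 1) (s n i x)
  ds_lt : ∀ (n i j : ℕ), i < j → j ≤ n + 1 → ∀ x : obj (n + 1),
      d (n + 1) i (s (n + 1) j x) = s n (j - 1) (d n i x)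
  ds_self : ∀ (n i : ℕ), i ≤ n → ∀ x : obj n, d n i (s n i x) = x
  ds_succ : ∀ (n i : ℕ), i ≤ n → ∀ x : obj n, d n (i + 1) (s n i x) = x
  ds_gt : ∀ (n i j : ℕ), j + 1 < i → i ≤ n + 2 → ∀ x : obj (n + 1),
      d (n + 1) i (s (n + 1) j x) = s n j (d n (i - 1) x)

namespace SSetC

variable (K : SSetC)

/-- The boundary `∂x = (d_0 x, …, d_{m+1} x)` of an `(m+1)`-simplex. -/
def bdry {m : ℕ} (x : K.obj (m + 1)) : Fin (m + 2) → K.obj m := fun i => K.d m i x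

/-- An `(m+2)`-tuple of `m`-simplices is an `m`-boundary if it is the boundary of
some `(m+1)`-simplex. -/
def IsBoundary {m : ℕ} (c : Fin (m + 2) → K.obj m) : Prop :=
  ∃ x : K.obj (m + 1), K.bdry x = c

/-- An `(m+2)`-tuple of `m`-simplices is compatible (an `m`-cycle) if
`d_i x_j = d_{j-1} x_i` for all `i < j` (a vacuous condition for `m = 0`). -/
def Compat : ∀ {m : ℕ}, (Fin (m + 2) → K.obj m) → Prop
  | 0 => fun _ => True
  | m + 1 => fun c => ∀ i j : Fin (m + 3), (i : ℕ) < (j : ℕ) →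
      K.d m i (c j) = K.d m ((j : ℕ) - 1) (c i)

/-- Compatibility of an `(m,k)`-horn: the entry at position `k` is disregarded. -/
def HornCompat : ∀ {m : ℕ}, ℕ → (Fin (m + 2) → K.obj m) → Prop
  | 0 => fun _ _ => True
  | m + 1 => fun k c => ∀ i j : Fin (m + 3), (i : ℕ) ≠ k → (j : ℕ) ≠ k → (i : ℕ) < (j : ℕ) →
      K.d m i (c j) = K.d m ((j : ℕ) - 1) (c i)

/-- A simplicial set is a Kan complex if every horn has a filling. -/
def IsKan : Prop :=
  ∀ (m k : ℕ), k ≤ m + 1 → ∀ c : Fin (m + 2) → K.obj m, K.HornCompat k c →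
    ∃ x : K.obj (m + 1), ∀ i : Fin (m + 2), (i : ℕ) ≠ k → K.d m i x = c i

/-- The cycle `(s_{n-1} d_0 x, …, s_{n-1} d_{n-1} x, x, y)` used to define homotopy
of `n`-simplices (for `n = 0` it is just `(x, y)`). -/
def homotopyTuple : ∀ {n : ℕ}, K.obj n → K.obj n → Fin (n + 2) → K.obj n
  | 0 => fun x y => ![x, y]
  | n + 1 => fun x y i =>
      if (i : ℕ) < n + 1 then K.s n n (K.d n i x)
      else if (i : ℕ) = n + 1 then x else y

/-- Two `n`-simplices (with the same boundary) are homotopic if the corresponding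
cycle is a boundary. -/
def Homotopic {n : ℕ} (x y : K.obj n) : Prop :=
  K.IsBoundary (K.homotopyTuple x y)

/-- `∂x = ∂y` (a vacuous condition for vertices). -/
def SameBdry : ∀ {n : ℕ}, K.obj n → K.obj n → Prop
  | 0 => fun _ _ => True
  | _ + 1 => fun x y => K.bdry x = K.bdry y

/-- The simplex `⋆_n` of the subcomplex generated by a base point. -/
def basept (b : K.obj 0) : ∀ n : ℕ, K.obj n
  | 0 => b
  | n + 1 => K.s n 0 (basept b n)

lemma basept_succ (b : K.obj 0) (n : ℕ) : K.basept b (n + 1) = K.s n 0 (K.basept b n) := rfl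

lemma s_basept (b : K.obj 0) : ∀ n i : ℕ, i ≤ n → K.s n i (K.basept b n) = K.basept b (n + 1) := by
  intro n
  induction n with
  | zero => intro i hi; interval_cases i; rfl
  | succ n ih =>
    intro i hi
    match i, hi with
    | 0, _ => rfl
    | (i + 1), hi =>
      have h1 : K.basept b (n + 1) = K.s n 0 (K.basept b n) := rfl
      rw [h1, ← K.ss n 0 i (Nat.zero_le _) (by omega), ih i (by omega)]
      exact (K.basept_succ b (n + 1)).symm

lemma d_basept (b : K.obj 0) : ∀ n i : ℕ, i ≤ n + 1 → K.d n i (K.basept b (n + 1)) = K.basept b n := by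
  intro n
  induction n with
  | zero =>
    intro i hi
    interval_cases i
    · exact K.ds_self 0 0 (le_refl 0) b
    · exact K.ds_succ 0 0 (le_refl 0) b
  | succ n ih =>
    intro i hi
    match i, hi with
    | 0, _ => exact K.ds_self (n + 1) 0 (Nat.zero_le _) _
    | 1, _ => exact K.ds_succ (n + 1) 0 (Nat.zero_le _) _
    | (i + 2), hi =>
      have h1 : K.basept b (n + 1 + 1) = K.s (n + 1) 0 (K.basept b (n + 1)) := rfl
      rw [h1, K.ds_gt n (i + 2) 0 (by omega) (by omega)]
      show K.s n 0 (K.d n (i + 1) (K.basept b (n + 1))) = _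
      rw [ih (i + 1) (by omega), K.s_basept b n 0 (Nat.zero_le _)]

/-- An `(m+1)`-simplex is spherical if all of its faces are the base point. -/
def IsSph (b : K.obj 0) {m : ℕ} (x : K.obj (m + 1)) : Prop :=
  ∀ i : Fin (m + 2), K.d m i x = K.basept b m

/-- Sphericality for simplices of arbitrary dimension (vacuous for vertices). -/
def IsSph' (b : K.obj 0) : ∀ {n : ℕ}, K.obj n → Prop
  | 0 => fun _ => True
  | _ + 1 => fun x => K.IsSph b x

lemma basept_isSph (b : K.obj 0) (m : ℕ) : K.IsSph b (K.basept b (m + 1)) :=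
  fun i => K.d_basept b m i (Nat.lt_succ_iff.mp i.isLt)

/-- The cycle `(⋆, …, ⋆, y, z, x)` witnessing `[x][y] = [z]` in `π_{m+1}`. -/
def mulTuple (b : K.obj 0) {m : ℕ} (x y z : K.obj (m + 1)) : Fin (m + 3) → K.obj (m + 1) :=
  fun i =>
    if (i : ℕ) < m then K.basept b (m + 1)
    else if (i : ℕ) = m then y
    else if (i : ℕ) = m + 1 then z
    else x

/-- `z` is a product of `x` and `y` in the sense of the homotopy group `π_{m+1}`. -/
def MulWitness (b : K.obj 0) {m : ℕ} (x y z : K.obj (m + 1)) : Prop :=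
  K.IsBoundary (K.mulTuple b x y z)

/-- Spherical `(m+1)`-simplices: the representatives of `π_{m+1}(K,⋆)`. -/
def Sph (b : K.obj 0) (m : ℕ) := {x : K.obj (m + 1) // K.IsSph b x}

/-- The homotopy group `π_{m+1}(K,⋆)` as a quotient set. -/
def piGrp (b : K.obj 0) (m : ℕ) := Quot (fun x y : K.Sph b m => K.Homotopic x.1 y.1)

/-- The homotopy class of a spherical simplex. -/
def cls (b : K.obj 0) (m : ℕ) (x : K.Sph b m) : K.piGrp b m := Quot.mk _ x

/-- A binary operation on `π_{m+1}(K,⋆)` is induced by horn filling if it sends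
classes of `x` and `y` to the class of any product witness `z`. -/
def MulDescends (b : K.obj 0) (m : ℕ) (mul : K.piGrp b m → K.piGrp b m → K.piGrp b m) : Prop :=
  ∀ x y z : K.Sph b m, K.MulWitness b x.1 y.1 z.1 → mul (K.cls b m x) (K.cls b m y) = K.cls b m z

/-- A Kan complex is minimal if homotopic simplices with equal boundaries are equal. -/
def Minimal : Prop :=
  ∀ (n : ℕ) (x y : K.obj n), K.SameBdry x y → K.Homotopic x y → x = y

end SSetC

/-!
Write `T(p, q, r)` (`IsTriangle`) when `(⋆, …, ⋆, p, q, r)` is a boundary. Then `[x][y] = [z]`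
is `T(y, z, x)`, `x ∼ y` is `T(⋆, x, y)`, and degeneracies of `a` give `T(a, a, ⋆)` and
`T(⋆, a, a)`. Filling a horn whose faces are `⋆` except at the last four positions shows that
whenever three faces of a tetrahedron of such triangles exist, so does the fourth. Independence
of choices, the left unit law and associativity are all instances of this, and left inverses come
from filling a spherical horn, so `Group.ofLeftAxioms` applies. For `n ≥ 2` there is room for one
more position off the base point, and three fillings through the boundaries `(z₁, z₁, y, y)` and
`(z₂, x, ⋆, y)`, where `z₁ = xy` and `z₂ = yx`, give `xy ∼ yx`.
-/

namespace SSetC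

variable {K : SSetC}

theorem IsSph.d_eq {b : K.obj 0} {m : ℕ} {x : K.obj (m + 1)} (hx : K.IsSph b x) {i : ℕ}
    (hi : i ≤ m + 1) : K.d m i x = K.basept b m :=
  hx ⟨i, by omega⟩

theorem IsSph.d_s {b : K.obj 0} {m : ℕ} {a : K.obj (m + 1)} (ha : K.IsSph b a) {i j : ℕ}
    (hj : j ≤ m + 1) (hi : i ≤ m + 2) :
    K.d (m + 1) i (K.s (m + 1) j a) = if i = j ∨ i = j + 1 then a else K.basept b (m + 1) := by
  rcases Nat.lt_trichotomy i j with h | rfl | h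
  · rw [K.ds_lt m i j h hj, ha.d_eq (by omega), K.s_basept b m _ (by omega), if_neg (by omega)]
  · rw [K.ds_self (m + 1) i hj, if_pos (Or.inl rfl)]
  · obtain rfl | h' := (show i = j + 1 ∨ j + 1 < i by omega)
    · rw [K.ds_succ (m + 1) j hj, if_pos (Or.inr rfl)]
    · rw [K.ds_gt m i j h' hi, ha.d_eq (by omega), K.s_basept b m j (by omega), if_neg (by omega)]

theorem IsKan.exists_fill (hK : K.IsKan) {n k : ℕ} (hk : k ≤ n + 2) (c : ℕ → K.obj (n + 1))
    (hc : ∀ i j, i ≠ k → j ≠ k → i < j → j ≤ n + 2 → K.d n i (c j) = K.d n (j - 1) (c i)) :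
    ∃ x : K.obj (n + 2), ∀ i ≤ n + 2, i ≠ k → K.d (n + 1) i x = c i := by
  obtain ⟨x, hx⟩ := hK (n + 1) k hk (fun i => c i) fun i j hik hjk hij =>
    hc i j hik hjk hij (by omega)
  exact ⟨x, fun i hi hik => hx ⟨i, by omega⟩ hik⟩

theorem IsKan.exists_isSph_fill (hK : K.IsKan) (b : K.obj 0) {m k : ℕ} (hk : k ≤ m + 2)
    (c : ℕ → K.obj (m + 1)) (hc : ∀ i ≤ m + 2, i ≠ k → K.IsSph b (c i)) :
    ∃ w : K.obj (m + 2), (∀ i ≤ m + 2, i ≠ k → K.d (m + 1) i w = c i) ∧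
      K.IsSph b (K.d (m + 1) k w) := by
  obtain ⟨w, hw⟩ := hK.exists_fill hk c fun i j hik hjk hij hj => by
    rw [(hc j hj hjk).d_eq (by omega), (hc i (by omega) hik).d_eq (by omega)]
  refine ⟨w, hw, fun i => ?_⟩
  rcases Nat.lt_or_ge i k with h | h
  · rw [K.dd m i k h (by omega) w, hw i (by omega) (by omega),
      (hc i (by omega) (by omega)).d_eq (by omega)]
  · rw [← Nat.add_sub_cancel (i : ℕ) 1, ← K.dd m k (i + 1) (by omega) (by omega) w,
      hw (i + 1) (by omega) (by omega), (hc (i + 1) (by omega) (by omega)).d_eq (by omega)]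

theorem IsKan.exists_face_of_horn (hK : K.IsKan) {n k : ℕ} (hk : k ≤ n + 2) (c : ℕ → K.obj (n + 1))
    (hc : ∀ i j, i ≠ k → j ≠ k → i < j → j ≤ n + 2 → K.d n i (c j) = K.d n (j - 1) (c i)) :
    ∃ w : K.obj (n + 1), ∀ i ≤ n + 1,
      K.d n i w = if i < k then K.d n (k - 1) (c i) else K.d n k (c (i + 1)) := by
  obtain ⟨x, hx⟩ := hK.exists_fill hk c hc
  refine ⟨K.d (n + 1) k x, fun i hi => ?_⟩
  split_ifs with h
  · rw [K.dd n i k h (by omega) x, hx i (by omega) (by omega)]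
  · rw [← Nat.add_sub_cancel i 1, ← K.dd n k (i + 1) (by omega) (by omega) x,
      hx (i + 1) (by omega) (by omega), Nat.add_sub_cancel]

/-- The faces of `w` are `⋆` at the first `p` positions, followed by the entries of `l`;
positions past the end of `l` are `⋆` as well. -/
def HasStarBdry (b : K.obj 0) {ℓ : ℕ} (p : ℕ) (w : K.obj (ℓ + 2)) (l : List (K.obj (ℓ + 1))) :
    Prop :=
  ∀ i ≤ ℓ + 2, K.d (ℓ + 1) i w =
    if i < p then K.basept b (ℓ + 1) else l.getD (i - p) (K.basept b (ℓ + 1))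

theorem hasStarBdry_succ_iff {b : K.obj 0} {ℓ p : ℕ} {w : K.obj (ℓ + 2)}
    {l : List (K.obj (ℓ + 1))} :
    K.HasStarBdry b (p + 1) w l ↔ K.HasStarBdry b p w (K.basept b (ℓ + 1) :: l) := by
  refine forall₂_congr fun i _ => ?_
  rcases Nat.lt_trichotomy i p with h | rfl | h
  · rw [if_pos (by omega), if_pos h]
  · simp
  · rw [if_neg (by omega), if_neg (by omega), show i - p = i - (p + 1) + 1 by omega,
      List.getD_cons_succ]

theorem IsSph.hasStarBdry_s {b : K.obj 0} {ℓ p t : ℕ} {a : K.obj (ℓ + 1)} (ha : K.IsSph b a)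
    (ht : p + t ≤ ℓ + 1) :
    K.HasStarBdry b p (K.s (ℓ + 1) (p + t) a)
      (List.replicate t (K.basept b (ℓ + 1)) ++ [a, a]) := by
  intro i hi
  rw [ha.d_s ht hi]
  simp only [List.getD_eq_getElem?_getD, List.getElem?_append, List.getElem?_replicate,
    List.length_replicate, List.getElem?_cons, List.getElem?_nil]
  split_ifs <;> first | rfl | omega

/-- `E o` lists the faces after position `p` of face `p + o` of an `(ℓ + 3)`-simplex, and `hE` is
the simplicial identity `dᵢ dⱼ = dⱼ₋₁ dᵢ` read off these lists. -/
theorem IsKan.exists_hasStarBdry_of_horn (hK : K.IsKan) (b : K.obj 0) {ℓ p k : ℕ}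
    (hk : p + k ≤ ℓ + 3) (E : ℕ → List (K.obj (ℓ + 1)))
    (hE : ∀ o₁ o₂, o₁ < o₂ → p + o₂ ≤ ℓ + 3 →
      (E o₂).getD o₁ (K.basept b (ℓ + 1)) = (E o₁).getD (o₂ - 1) (K.basept b (ℓ + 1)))
    (hW : ∀ o, p + o ≤ ℓ + 3 → o ≠ k → ∃ w, K.HasStarBdry b p w (E o)) :
    ∃ w, K.HasStarBdry b p w (E k) := by
  have : ∀ o, ∃ w, p + o ≤ ℓ + 3 → o ≠ k → K.HasStarBdry b p w (E o) := fun o =>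
    if h : p + o ≤ ℓ + 3 ∧ o ≠ k then (hW o h.1 h.2).imp fun _ hw _ _ => hw
    else ⟨K.basept b _, fun h₁ h₂ => absurd ⟨h₁, h₂⟩ h⟩
  choose W hW using this
  set c : ℕ → K.obj (ℓ + 2) := fun t => if t < p then K.basept b (ℓ + 2) else W (t - p)
  have hc : ∀ t ≤ ℓ + 3, t ≠ p + k → ∀ i ≤ ℓ + 2, K.d (ℓ + 1) i (c t) =
      if i < p ∨ t < p then K.basept b (ℓ + 1) else (E (t - p)).getD (i - p) (K.basept b _) := by
    intro t ht htk i hi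
    by_cases htp : t < p
    · rw [if_pos (Or.inr htp)]
      exact (congrArg _ (if_pos htp)).trans (K.d_basept b (ℓ + 1) i (by omega))
    · rw [(congrArg _ (if_neg htp) : K.d (ℓ + 1) i (c t) = _),
        hW (t - p) (by omega) (by omega) i hi]
      simp only [htp, or_false]
  obtain ⟨w, hw⟩ := hK.exists_face_of_horn hk c fun i j hik hjk hij hj => by
    rw [hc j hj hjk i (by omega), hc i (by omega) hik (j - 1) (by omega)]
    by_cases hip : i < p
    · rw [if_pos (Or.inl hip), if_pos (Or.inr hip)]
    · rw [if_neg (by omega), if_neg (by omega), hE (i - p) (j - p) (by omega) (by omega),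
        show j - p - 1 = j - 1 - p by omega]
  refine ⟨w, fun i hi => ?_⟩
  rw [hw i hi]
  by_cases hip : i < p
  · rw [if_pos (by omega), if_pos hip, hc i (by omega) (by omega) _ (by omega), if_pos (Or.inr hip)]
  rw [if_neg hip]
  by_cases hik : i < p + k
  · rw [if_pos hik, hc i (by omega) (by omega) _ (by omega), if_neg (by omega),
      show p + k - 1 - p = k - 1 by omega, ← hE (i - p) k (by omega) hk]
  · rw [if_neg hik, hc (i + 1) (by omega) (by omega) _ (by omega), if_neg (by omega),
      show p + k - p = k by omega, hE k (i + 1 - p) (by omega) (by omega),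
      show i + 1 - p - 1 = i - p by omega]

theorem hasStarBdry_append_basept_iff {b : K.obj 0} {ℓ p : ℕ} {w : K.obj (ℓ + 2)}
    {l : List (K.obj (ℓ + 1))} :
    K.HasStarBdry b p w (l ++ [K.basept b (ℓ + 1)]) ↔ K.HasStarBdry b p w l := by
  refine forall₂_congr fun i _ => ?_
  simp only [List.getD_eq_getElem?_getD, List.getElem?_append, List.getElem?_cons,
    List.getElem?_nil]
  split_ifs <;> simp_all

theorem isSph_getD {b : K.obj 0} {m : ℕ} {l : List (K.obj (m + 1))} (hl : ∀ a ∈ l, K.IsSph b a)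
    (j : ℕ) : K.IsSph b (l.getD j (K.basept b (m + 1))) := by
  by_cases h : j < l.length
  · rw [List.getD_eq_getElem _ _ h]
    exact hl _ (List.getElem_mem h)
  · rw [List.getD_eq_default _ _ (not_lt.1 h)]
    exact K.basept_isSph b m

theorem IsKan.exists_hasStarBdry_isSph (hK : K.IsKan) (b : K.obj 0) {m p j : ℕ}
    (hpj : p + j ≤ m + 2) (l : List (K.obj (m + 1))) (hj : j < l.length)
    (hl : ∀ a ∈ l, K.IsSph b a) :
    ∃ w : K.obj (m + 2), K.IsSph b (K.d (m + 1) (p + j) w) ∧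
      K.HasStarBdry b p w (l.set j (K.d (m + 1) (p + j) w)) := by
  obtain ⟨w, hw, hsph⟩ := hK.exists_isSph_fill b hpj
    (fun i => if i < p then K.basept b (m + 1) else l.getD (i - p) (K.basept b (m + 1)))
    fun i _ _ => by
      split_ifs
      · exact K.basept_isSph b m
      · exact isSph_getD hl _
  refine ⟨w, hsph, fun i hi => ?_⟩
  by_cases hij : i = p + j
  · subst hij
    simp [List.getD_eq_getElem?_getD, hj]
  · rw [hw i hi hij]
    simp only [List.getD_eq_getElem?_getD, List.getElem?_set]
    split_ifs <;> first | rfl | omega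

def IsTriangle (b : K.obj 0) (m : ℕ) (x y z : K.obj (m + 1)) : Prop :=
  ∃ w : K.obj (m + 2), K.HasStarBdry b m w [x, y, z]

theorem exists_hasStarBdry_iff_isBoundary {b : K.obj 0} {m : ℕ} {l : List (K.obj (m + 1))}
    {c : Fin (m + 3) → K.obj (m + 1)}
    (hc : ∀ i : Fin (m + 3), c i = if (i : ℕ) < m then K.basept b (m + 1)
      else l.getD (i - m) (K.basept b (m + 1))) :
    (∃ w, K.HasStarBdry b m w l) ↔ K.IsBoundary c :=
  ⟨fun ⟨w, hw⟩ => ⟨w, funext fun i => (hw i (by omega)).trans (hc i).symm⟩,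
    fun ⟨w, hw⟩ => ⟨w, fun i hi => (congrFun hw ⟨i, by omega⟩).trans (hc ⟨i, by omega⟩)⟩⟩

theorem isTriangle_iff_mulWitness {b : K.obj 0} {m : ℕ} {x y z : K.obj (m + 1)} :
    K.IsTriangle b m y z x ↔ K.MulWitness b x y z :=
  exists_hasStarBdry_iff_isBoundary fun ⟨i, hi⟩ => by
    obtain h | rfl | rfl | rfl : i < m ∨ i = m ∨ i = m + 1 ∨ i = m + 2 := by omega
    · simp [mulTuple, h]
    all_goals simp [mulTuple]

theorem IsSph.isTriangle_basept_iff_homotopic {b : K.obj 0} {m : ℕ} {x y : K.obj (m + 1)}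
    (hx : K.IsSph b x) : K.IsTriangle b m (K.basept b (m + 1)) x y ↔ K.Homotopic x y :=
  exists_hasStarBdry_iff_isBoundary fun ⟨i, hi⟩ => by
    obtain h | rfl | rfl | rfl : i < m ∨ i = m ∨ i = m + 1 ∨ i = m + 2 := by omega
    · simp [homotopyTuple, h.le, h, hx.d_eq (show i ≤ m + 1 by omega), K.s_basept]
    · simp [homotopyTuple, hx.d_eq (show i ≤ i + 1 by omega), K.s_basept]
    all_goals simp [homotopyTuple]

theorem IsSph.isTriangle_self_basept {b : K.obj 0} {m : ℕ} {a : K.obj (m + 1)}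
    (ha : K.IsSph b a) : K.IsTriangle b m a a (K.basept b (m + 1)) :=
  ⟨_, hasStarBdry_append_basept_iff.2 (ha.hasStarBdry_s (t := 0) (by omega))⟩

theorem IsSph.isTriangle_basept_self {b : K.obj 0} {m : ℕ} {a : K.obj (m + 1)}
    (ha : K.IsSph b a) : K.IsTriangle b m (K.basept b (m + 1)) a a :=
  ⟨_, ha.hasStarBdry_s (t := 1) (by omega)⟩

/-- Face `o` of a tetrahedron with edges `eᵢⱼ` is the triangle opposite vertex `o`. -/
def tetraFaces {α : Type} (e₀₁ e₀₂ e₀₃ e₁₂ e₁₃ e₂₃ : α) (o : ℕ) : List α :=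
  [[e₂₃, e₁₃, e₁₂], [e₂₃, e₀₃, e₀₂], [e₁₃, e₀₃, e₀₁], [e₁₂, e₀₂, e₀₁]].getD o []

theorem tetraFaces_getD {α : Type} (e₀₁ e₀₂ e₀₃ e₁₂ e₁₃ e₂₃ d : α) {o₁ o₂ : ℕ} (h : o₁ < o₂)
    (ho₂ : o₂ ≤ 3) :
    (tetraFaces e₀₁ e₀₂ e₀₃ e₁₂ e₁₃ e₂₃ o₂).getD o₁ d =
      (tetraFaces e₀₁ e₀₂ e₀₃ e₁₂ e₁₃ e₂₃ o₁).getD (o₂ - 1) d := by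
  interval_cases o₂ <;> interval_cases o₁ <;> rfl

variable {b : K.obj 0} {m : ℕ} {e₀₁ e₀₂ e₀₃ e₁₂ e₁₃ e₂₃ : K.obj (m + 1)}

theorem IsKan.exists_tetraFace_of_horn (hK : K.IsKan) {k : ℕ} (hk : k ≤ 3)
    (h : ∀ o ≤ 3, o ≠ k → ∃ w, K.HasStarBdry b m w (tetraFaces e₀₁ e₀₂ e₀₃ e₁₂ e₁₃ e₂₃ o)) :
    ∃ w, K.HasStarBdry b m w (tetraFaces e₀₁ e₀₂ e₀₃ e₁₂ e₁₃ e₂₃ k) :=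
  hK.exists_hasStarBdry_of_horn b (by omega) _
    (fun _ _ h₁₂ h₂ => tetraFaces_getD _ _ _ _ _ _ _ h₁₂ (by omega))
    fun o ho hok => h o (by omega) hok

theorem IsKan.isTriangle_of_horn₁ (hK : K.IsKan) (h₀ : K.IsTriangle b m e₂₃ e₁₃ e₁₂)
    (h₂ : K.IsTriangle b m e₁₃ e₀₃ e₀₁) (h₃ : K.IsTriangle b m e₁₂ e₀₂ e₀₁) :
    K.IsTriangle b m e₂₃ e₀₃ e₀₂ :=
  hK.exists_tetraFace_of_horn (k := 1) (by omega) fun o ho hne => by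
    interval_cases o
    exacts [h₀, absurd rfl hne, h₂, h₃]

theorem IsKan.isTriangle_of_horn₂ (hK : K.IsKan) (h₀ : K.IsTriangle b m e₂₃ e₁₃ e₁₂)
    (h₁ : K.IsTriangle b m e₂₃ e₀₃ e₀₂) (h₃ : K.IsTriangle b m e₁₂ e₀₂ e₀₁) :
    K.IsTriangle b m e₁₃ e₀₃ e₀₁ :=
  hK.exists_tetraFace_of_horn (k := 2) (by omega) fun o ho hne => by
    interval_cases o
    exacts [h₀, h₁, absurd rfl hne, h₃]

theorem IsKan.isTriangle_of_horn₃ (hK : K.IsKan) (h₀ : K.IsTriangle b m e₂₃ e₁₃ e₁₂)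
    (h₁ : K.IsTriangle b m e₂₃ e₀₃ e₀₂) (h₂ : K.IsTriangle b m e₁₃ e₀₃ e₀₁) :
    K.IsTriangle b m e₁₂ e₀₂ e₀₁ :=
  hK.exists_tetraFace_of_horn (k := 3) (by omega) fun o ho hne => by
    interval_cases o
    exacts [h₀, h₁, h₂, absurd rfl hne]

theorem IsKan.exists_isTriangle_mul (hK : K.IsKan) {x y : K.obj (m + 1)} (hx : K.IsSph b x)
    (hy : K.IsSph b y) : ∃ z, K.IsSph b z ∧ K.IsTriangle b m y z x := by
  obtain ⟨w, hz, hw⟩ := hK.exists_hasStarBdry_isSph b (p := m) (j := 1) (by omega)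
    [y, K.basept b (m + 1), x] (by simp) (by simp [hx, hy, K.basept_isSph])
  exact ⟨_, hz, w, hw⟩

theorem IsKan.exists_isTriangle_inv (hK : K.IsKan) {x : K.obj (m + 1)} (hx : K.IsSph b x) :
    ∃ a, K.IsSph b a ∧ K.IsTriangle b m x (K.basept b (m + 1)) a := by
  obtain ⟨w, ha, hw⟩ := hK.exists_hasStarBdry_isSph b (p := m) (j := 2) (by omega)
    [x, K.basept b (m + 1), K.basept b (m + 1)] (by simp) (by simp [hx, K.basept_isSph])
  exact ⟨_, ha, w, hw⟩

theorem IsKan.exists_hasStarBdry_square (hK : K.IsKan) {n : ℕ} {a c : K.obj (n + 2)}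
    (ha : K.IsSph b a) (hc : K.IsSph b c) : ∃ v, K.HasStarBdry b n v [a, a, c, c] := by
  set e := K.basept b (n + 2)
  exact hK.exists_hasStarBdry_of_horn b (k := 2) (by omega)
    (fun o => [[a, a], [a, a], [a, a, c, c], [e, e, c, c], [e, e, c, c]].getD o [])
    (fun o₁ o₂ h₁₂ h₂ => by
      obtain h₂ : o₂ ≤ 4 := by omega
      interval_cases o₂ <;> interval_cases o₁ <;> rfl)
    fun o ho hne => by
      obtain ho : o ≤ 4 := by omega
      interval_cases o
      exacts [⟨_, ha.hasStarBdry_s (t := 0) (by omega)⟩, ⟨_, ha.hasStarBdry_s (t := 0) (by omega)⟩,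
        absurd rfl hne, ⟨_, hc.hasStarBdry_s (t := 2) (by omega)⟩,
        ⟨_, hc.hasStarBdry_s (t := 2) (by omega)⟩]

theorem IsKan.isTriangle_basept_of_swap (hK : K.IsKan) {n : ℕ} {x y z₁ z₂ : K.obj (n + 2)}
    (hy : K.IsSph b y) (hz₁ : K.IsSph b z₁) (hz₂ : K.IsSph b z₂)
    (h₁ : K.IsTriangle b (n + 1) y z₁ x) (h₂ : K.IsTriangle b (n + 1) x z₂ y) :
    K.IsTriangle b (n + 1) (K.basept b (n + 2)) z₁ z₂ := by
  set e := K.basept b (n + 2)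
  obtain ⟨w₁, hw₁⟩ := h₁
  obtain ⟨w₂, hw₂⟩ := h₂
  obtain ⟨v₁, hv₁⟩ := hK.exists_hasStarBdry_square hz₁ hy
  obtain ⟨v₂, hv₂⟩ : ∃ v, K.HasStarBdry b n v [z₂, x, e, y] :=
    hK.exists_hasStarBdry_of_horn b (k := 2) (by omega)
      (fun o => [[e, z₂, z₂], [e, x, z₂, y], [z₂, x, e, y], [z₂, z₂], [e, y, y]].getD o [])
      (fun o₁ o₂ h₁₂ h₂ => by
        obtain h₂ : o₂ ≤ 4 := by omega
        interval_cases o₂ <;> interval_cases o₁ <;> rfl)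
      fun o ho hne => by
        obtain ho : o ≤ 4 := by omega
        interval_cases o
        exacts [⟨_, hz₂.hasStarBdry_s (t := 1) (by omega)⟩, ⟨_, hasStarBdry_succ_iff.1 hw₂⟩,
          absurd rfl hne, ⟨_, hz₂.hasStarBdry_s (t := 0) (by omega)⟩,
          ⟨_, hy.hasStarBdry_s (t := 1) (by omega)⟩]
  obtain ⟨w, hw⟩ : ∃ w, K.HasStarBdry b n w [e, e, z₁, z₂] :=
    hK.exists_hasStarBdry_of_horn b (k := 0) (by omega)
      (fun o => [[e, e, z₁, z₂], [e, y, z₁, x], [e, y, y], [z₁, z₁, y, y], [z₂, x, e, y]].getD o [])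
      (fun o₁ o₂ h₁₂ h₂ => by
        obtain h₂ : o₂ ≤ 4 := by omega
        interval_cases o₂ <;> interval_cases o₁ <;> rfl)
      fun o ho hne => by
        obtain ho : o ≤ 4 := by omega
        interval_cases o
        exacts [absurd rfl hne, ⟨_, hasStarBdry_succ_iff.1 hw₁⟩,
          ⟨_, hy.hasStarBdry_s (t := 1) (by omega)⟩, ⟨_, hv₁⟩, ⟨_, hv₂⟩]
  exact ⟨w, hasStarBdry_succ_iff.2 hw⟩

def Sph.basept (b : K.obj 0) (m : ℕ) : K.Sph b m := ⟨K.basept b (m + 1), K.basept_isSph b m⟩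

noncomputable def mulRep (hK : K.IsKan) (b : K.obj 0) {m : ℕ} (x y : K.Sph b m) : K.Sph b m :=
  ⟨_, (hK.exists_isTriangle_mul x.2 y.2).choose_spec.1⟩

theorem isTriangle_mulRep (hK : K.IsKan) (x y : K.Sph b m) :
    K.IsTriangle b m y.1 (mulRep hK b x y).1 x.1 :=
  (hK.exists_isTriangle_mul x.2 y.2).choose_spec.2

theorem cls_eq_of_isTriangle {u v : K.Sph b m}
    (h : K.IsTriangle b m (K.basept b (m + 1)) u.1 v.1) : K.cls b m u = K.cls b m v :=
  Quot.sound (u.2.isTriangle_basept_iff_homotopic.1 h)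

theorem cls_mulRep_eq (hK : K.IsKan) {x y z : K.Sph b m} (h : K.IsTriangle b m y.1 z.1 x.1) :
    K.cls b m (mulRep hK b x y) = K.cls b m z :=
  cls_eq_of_isTriangle <|
    hK.isTriangle_of_horn₁ y.2.isTriangle_basept_self (isTriangle_mulRep hK x y) h

noncomputable def piMul (hK : K.IsKan) (b : K.obj 0) (m : ℕ) :
    K.piGrp b m → K.piGrp b m → K.piGrp b m :=
  Quot.lift₂ (fun x y => K.cls b m (mulRep hK b x y))
    (fun x y _ h => (cls_mulRep_eq hK <| hK.isTriangle_of_horn₃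
      (y.2.isTriangle_basept_iff_homotopic.2 h) (mulRep hK b x y).2.isTriangle_basept_self
      (isTriangle_mulRep hK x y)).symm)
    (fun x _ y h => (cls_mulRep_eq hK <| hK.isTriangle_of_horn₂
      y.2.isTriangle_self_basept (isTriangle_mulRep hK x y)
      (x.2.isTriangle_basept_iff_homotopic.2 h)).symm)

theorem mulDescends_piMul (hK : K.IsKan) : K.MulDescends b m (piMul hK b m) :=
  fun _ _ _ h => cls_mulRep_eq hK (isTriangle_iff_mulWitness.2 h)

theorem piMul_cls_basept (hK : K.IsKan) (a : K.piGrp b m) :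
    piMul hK b m (K.cls b m (Sph.basept b m)) a = a := by
  induction a using Quot.ind with | _ x => ?_
  exact mulDescends_piMul hK _ x x (isTriangle_iff_mulWitness.1 x.2.isTriangle_self_basept)

theorem piMul_assoc (hK : K.IsKan) (a a' a'' : K.piGrp b m) :
    piMul hK b m (piMul hK b m a a') a'' = piMul hK b m a (piMul hK b m a' a'') := by
  induction a using Quot.ind with | _ x => ?_
  induction a' using Quot.ind with | _ y => ?_
  induction a'' using Quot.ind with | _ z => ?_
  exact (cls_mulRep_eq hK <| hK.isTriangle_of_horn₂ (isTriangle_mulRep hK y z)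
    (isTriangle_mulRep hK (mulRep hK b x y) z) (isTriangle_mulRep hK x y)).symm

theorem exists_piMul_eq_cls_basept (hK : K.IsKan) (a : K.piGrp b m) :
    ∃ a', piMul hK b m a' a = K.cls b m (Sph.basept b m) := by
  induction a using Quot.ind with | _ x => ?_
  obtain ⟨a, ha, h⟩ := hK.exists_isTriangle_inv x.2
  exact ⟨K.cls b m ⟨a, ha⟩, mulDescends_piMul hK ⟨a, ha⟩ x _ (isTriangle_iff_mulWitness.1 h)⟩

theorem piMul_comm (hK : K.IsKan) (hm : 1 ≤ m) (a a' : K.piGrp b m) :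
    piMul hK b m a a' = piMul hK b m a' a := by
  obtain ⟨n, rfl⟩ := Nat.exists_eq_add_of_le' hm
  induction a using Quot.ind with | _ x => ?_
  induction a' using Quot.ind with | _ y => ?_
  exact cls_eq_of_isTriangle <| hK.isTriangle_basept_of_swap y.2 (mulRep hK b x y).2
    (mulRep hK b y x).2 (isTriangle_mulRep hK x y) (isTriangle_mulRep hK y x)

noncomputable abbrev piGroup (hK : K.IsKan) (b : K.obj 0) (m : ℕ) : Group (K.piGrp b m) :=
  letI : Mul (K.piGrp b m) := ⟨piMul hK b m⟩
  letI : One (K.piGrp b m) := ⟨K.cls b m (Sph.basept b m)⟩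
  letI : Inv (K.piGrp b m) := ⟨fun a => (exists_piMul_eq_cls_basept hK a).choose⟩
  Group.ofLeftAxioms (piMul_assoc hK) (piMul_cls_basept hK)
    fun a => (exists_piMul_eq_cls_basept hK a).choose_spec

end SSetC

open SSetC in
/-- For every pointed Kan complex `(K, ⋆)` and every `n = m+1 ≥ 1`
the homotopy group `π_n(K, ⋆)` is a well-defined group: the base point is a valid
representative, products `[x][y] := [xy]` exist, the product descends to a
well-defined binary operation `mul` on the quotient (independence of all choices),
`[⋆]` is a two-sided identity, inverses exist, and the product is associative;
moreover for `n ≥ 2` (i.e. `m ≥ 1`) the group is abelian. -/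
theorem homotopy_group_welldefined (K : SSetC) (hK : K.IsKan) (b : K.obj 0) (m : ℕ) :
    K.IsSph b (K.basept b (m + 1)) ∧
    (∀ x y : K.obj (m + 1), K.IsSph b x → K.IsSph b y →
      ∃ z : K.obj (m + 1), K.IsSph b z ∧ K.MulWitness b x y z) ∧
    (∃ mul : K.piGrp b m → K.piGrp b m → K.piGrp b m,
      K.MulDescends b m mul ∧
      (∃ e : K.piGrp b m,
        (∀ x : K.Sph b m, x.1 = K.basept b (m + 1) → e = K.cls b m x) ∧
        (∀ a : K.piGrp b m, mul e a = a) ∧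
        (∀ a : K.piGrp b m, mul a e = a) ∧
        (∀ a : K.piGrp b m, ∃ a' : K.piGrp b m, mul a' a = e ∧ mul a a' = e)) ∧
      (∀ a a' a'' : K.piGrp b m, mul (mul a a') a'' = mul a (mul a' a'')) ∧
      (1 ≤ m → ∀ a a' : K.piGrp b m, mul a a' = mul a' a)) := by
  let := piGroup hK b m
  refine ⟨K.basept_isSph b m, fun x y hx hy => ?_, (· * ·), mulDescends_piMul hK,
    ⟨1, fun x hx => ?_, one_mul, mul_one, fun a => ⟨a⁻¹, inv_mul_cancel a, mul_inv_cancel a⟩⟩,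
    mul_assoc, fun hm => piMul_comm hK hm⟩
  · obtain ⟨z, hz, h⟩ := hK.exists_isTriangle_mul hx hy
    exact ⟨z, hz, isTriangle_iff_mulWitness.1 h⟩
  · exact congrArg (K.cls b m) (Subtype.ext hx.symm)
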